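/- arXiv:2404.18226 — 3 statements merged into one kernel-verified Lean document; each statement's English description precedes it below -/
import Mathlib

section
/- Birkhoff–von Neumann theorem: every doubly stochastic matrix is a convex combination of permutation matrices. -/
theorem Equiv.Perm.permMatrix_apply {n R : Type*} [DecidableEq n] [Zero R] [One R]
    (σ : Equiv.Perm n) (a b : n) : σ.permMatrix R a b = if σ a = b then 1 else 0 := by
  simp [PEquiv.toMatrix_apply]

theorem birkhoff_von_neumann {n : ℕ} (S : Matrix (Fin n) (Fin n) ℝ)
    (hpos : ∀ i j, 0 ≤ S i j)
    (hrow : ∀ i, ∑ j, S i j = 1)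
    (hcol : ∀ j, ∑ i, S i j = 1) :
    ∃ (k : ℕ) (w : Fin k → ℝ) (P : Fin k → Matrix (Fin n) (Fin n) ℝ),
      (∀ i, 0 ≤ w i) ∧ (∑ i, w i = 1) ∧
      (∀ i, ∃ σ : Equiv.Perm (Fin n), ∀ a b, P i a b = if σ b = a then 1 else 0) ∧
      S = ∑ i, w i • P i := by
  obtain ⟨w, hw_nonneg, hw_sum, hw_eq⟩ := exists_eq_sum_perm_of_mem_doublyStochastic
    (mem_doublyStochastic_iff_sum.mpr ⟨hpos, hrow, hcol⟩)
  let e := (Fintype.equivFin (Equiv.Perm (Fin n))).symm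
  -- `σ.permMatrix` has its ones at `(a, σ a)`, the statement's convention at `(σ b, b)`.
  refine ⟨_, w ∘ e, fun i => (e i).permMatrix ℝ, fun i => hw_nonneg _, ?_,
    fun i => ⟨(e i)⁻¹, ?_⟩, ?_⟩
  · rw [← hw_sum]; exact e.sum_comp w
  · intro a b
    simp only [Equiv.Perm.permMatrix_apply, Equiv.Perm.inv_eq_iff_eq]
    exact if_congr eq_comm rfl rfl
  · rw [← hw_eq]; exact (e.sum_comp fun σ => w σ • σ.permMatrix ℝ).symm
end

section
/- If S is doubly stochastic and nonzero in the sense that not all weight has been extracted (i.e., its row sums equal r > 0), then S has a positive diagonal: there exists a permutation σ with S i (σ i) > 0 for all i. (König/Frobenius step used in Birkhoff's algorithm.) -/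
/-!
Hall's marriage theorem applied to the bipartite graph of positive entries. A set `A` of rows
carries total mass `#A * r`, all of it in the columns `N(A)` where some row of `A` is positive;
those columns carry total mass `#N(A) * r`, so `#A ≤ #N(A)`. A Hall matching of rows into columns
is injective, hence a permutation.
-/

open Finset

variable {R ι : Type*} [Semiring R] [LinearOrder R] [IsStrictOrderedRing R]
  [Fintype ι] [DecidableEq ι]

theorem Matrix.card_le_card_biUnion_pos_of_sum_row_eq_of_sum_col_eq {M : Matrix ι ι R} {r : R}
    (hr : 0 < r) (hM : ∀ i j, 0 ≤ M i j) (hrow : ∀ i, ∑ j, M i j = r)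
    (hcol : ∀ j, ∑ i, M i j = r) (A : Finset ι) :
    #A ≤ #(A.biUnion fun i ↦ {j | 0 < M i j}) := by
  set N := A.biUnion fun i ↦ {j | 0 < M i j}
  have hA : ∑ i ∈ A, ∑ j ∈ N, M i j = #A * r := by
    rw [← nsmul_eq_mul, ← sum_const]
    refine sum_congr rfl fun i hi ↦ ?_
    rw [← hrow i]
    refine sum_subset (subset_univ _) fun j _ hj ↦ ?_
    refine le_antisymm (not_lt.1 fun hpos ↦ hj ?_) (hM i j)
    exact mem_biUnion.2 ⟨i, hi, by simpa using hpos⟩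
  have hN : ∑ i, ∑ j ∈ N, M i j = #N * r := by
    rw [← nsmul_eq_mul, ← sum_const, ← sum_congr rfl fun j _ ↦ hcol j]
    exact sum_comm
  have : (#A : R) * r ≤ #N * r := by
    rw [← hA, ← hN]
    exact sum_le_sum_of_subset_of_nonneg (subset_univ A)
      fun i _ _ ↦ sum_nonneg fun j _ ↦ hM i j
  exact_mod_cast le_of_mul_le_mul_right this hr

theorem Matrix.exists_perm_forall_pos_of_sum_row_eq_of_sum_col_eq {M : Matrix ι ι R} {r : R}
    (hr : 0 < r) (hM : ∀ i j, 0 ≤ M i j) (hrow : ∀ i, ∑ j, M i j = r)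
    (hcol : ∀ j, ∑ i, M i j = r) :
    ∃ σ : Equiv.Perm ι, ∀ i, 0 < M i (σ i) := by
  obtain ⟨g, hg, hgpos⟩ := (all_card_le_biUnion_card_iff_exists_injective _).1
    (card_le_card_biUnion_pos_of_sum_row_eq_of_sum_col_eq hr hM hrow hcol)
  exact ⟨Equiv.ofBijective g (Finite.injective_iff_bijective.1 hg), fun i ↦ by simpa using hgpos i⟩

theorem scaled_doubly_stochastic_has_positive_diagonal {n : ℕ}
    (S : Matrix (Fin n) (Fin n) ℝ) (r : ℝ) (hr : 0 < r)
    (hpos : ∀ i j, 0 ≤ S i j)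
    (hrow : ∀ i, ∑ j, S i j = r)
    (hcol : ∀ j, ∑ i, S i j = r) :
    ∃ σ : Equiv.Perm (Fin n), ∀ i, 0 < S i (σ i) :=
  S.exists_perm_forall_pos_of_sum_row_eq_of_sum_col_eq hr hpos hrow hcol
end

section
/- If the Hamming distance between bitstrings a and b is h ≥ 1, then the transposition (a b) can be written as a product of 2h − 1 transpositions, each of which swaps two bitstrings at Hamming distance 1. -/
/-!
Pick a coordinate `i` where `a` and `b` differ and let `c` be `a` with its `i`-th entry
replaced by `b i`. Then `c` is adjacent to `a` and one step closer to `b`, and conjugating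
`swap c b` by `swap a c` gives `swap a b`. Induction on the distance adds two transpositions
per step, starting from a single one at distance `1`.
-/

open Equiv

section HammingUpdate

variable {ι : Type*} [Fintype ι] [DecidableEq ι] {β : ι → Type*} [∀ i, DecidableEq (β i)]

theorem hammingDist_update_self_of_ne (a : ∀ i, β i) {i : ι} {x : β i} (hx : a i ≠ x) :
    hammingDist a (Function.update a i x) = 1 := by
  rw [hammingDist, Finset.card_eq_one]
  refine ⟨i, Finset.ext fun j => ?_⟩
  by_cases hji : j = i
  · simpa [hji] using hx
  · simp [hji]

theorem hammingDist_update_add_one_of_ne (a b : ∀ i, β i) {i : ι} (hi : a i ≠ b i) :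
    hammingDist (Function.update a i (b i)) b + 1 = hammingDist a b := by
  have hset : ({j | Function.update a i (b i) j ≠ b j} : Finset ι) =
      ({j | a j ≠ b j} : Finset ι).erase i := by
    ext j
    by_cases hji : j = i <;> simp [hji]
  rw [hammingDist, hammingDist, hset, Finset.card_erase_add_one (by simpa using hi)]

theorem exists_hammingDist_eq_one_of_hammingDist_eq_succ {a b : ∀ i, β i} {k : ℕ}
    (hab : hammingDist a b = k + 1) : ∃ c, hammingDist a c = 1 ∧ hammingDist c b = k := by
  obtain ⟨i, hi⟩ : ∃ i, a i ≠ b i := by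
    by_contra! hall
    simp [funext hall] at hab
  refine ⟨Function.update a i (b i), hammingDist_update_self_of_ne a hi, ?_⟩
  have := hammingDist_update_add_one_of_ne a b hi
  omega

theorem exists_list_prod_eq_swap_of_hammingDist_eq_succ (k : ℕ) {a b : ∀ i, β i}
    (hab : hammingDist a b = k + 1) :
    ∃ l : List (Perm (∀ i, β i)), l.length = 2 * k + 1 ∧
      (∀ p ∈ l, ∃ x y, hammingDist x y = 1 ∧ p = swap x y) ∧ l.prod = swap a b := by
  induction k generalizing a with
  | zero => exact ⟨[swap a b], rfl, by simpa using ⟨a, b, hab, rfl⟩, by simp⟩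
  | succ k ih =>
    obtain ⟨c, hac, hcb⟩ := exists_hammingDist_eq_one_of_hammingDist_eq_succ hab
    obtain ⟨l, hlen, hswaps, hprod⟩ := ih hcb
    refine ⟨swap a c :: l ++ [swap a c], by simp [hlen]; omega, ?_, ?_⟩
    · intro p hp
      simp only [List.mem_append, List.mem_cons, List.not_mem_nil, or_false] at hp
      rcases hp with (rfl | hp) | rfl
      · exact ⟨a, c, hac, rfl⟩
      · exact hswaps p hp
      · exact ⟨a, c, hac, rfl⟩
    · have hba : b ≠ a := by rintro rfl; simp at hab
      have hbc : b ≠ c := by rintro rfl; simp at hcb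
      rw [List.prod_append, List.prod_cons, List.prod_singleton, hprod, swap_comm a c,
        swap_comm c b, swap_mul_swap_mul_swap hbc hba]

end HammingUpdate

theorem transposition_as_hamming_one_swaps {n : ℕ} (a b : Fin n → Bool)
    (h : ℕ) (hh : hammingDist a b = h) (h1 : 1 ≤ h) :
    ∃ l : List (Equiv.Perm (Fin n → Bool)),
      l.length = 2 * h - 1 ∧
      (∀ p ∈ l, ∃ x y : Fin n → Bool, hammingDist x y = 1 ∧ p = Equiv.swap x y) ∧
      l.prod = Equiv.swap a b := by
  obtain ⟨k, rfl⟩ := Nat.exists_eq_add_of_le' h1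
  obtain ⟨l, hlen, hswaps, hprod⟩ := exists_list_prod_eq_swap_of_hammingDist_eq_succ k hh
  exact ⟨l, by omega, hswaps, hprod⟩
end
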